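/- Let Q be a uniformly random K-element subset of Fin J with 1 < K ≤ J and J ≥ 2, and let c : Fin J → ℝ be fixed. Define T = (1/K) Σ_{j∈Q} c j and the estimator V̂ = (1 − K/J) · Σ_{j∈Q} (c j − T)² / ((K−1)·K). Then E[V̂] = Var(T). -/

import Mathlib

/-!
Under sampling of `K` out of `J` units without replacement, a unit is included with probability
`K / J` and a pair of distinct units with probability `K (K - 1) / (J (J - 1))`; both are ratios
of binomial coefficients. Hence the expectations of `∑_{j ∈ Q} c j` and `(∑_{j ∈ Q} c j)²` are
explicit in `∑ c j` and `∑ c j²`. Since `|Q| = K`, the sample sum of squares is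
`∑_{j ∈ Q} c j² - (∑_{j ∈ Q} c j)² / K`, and both sides of the claim reduce to the same rational
expression in those two totals.
-/

open Finset

/-- Expectation of a real-valued function of a uniformly random `K`-element subset of `Fin J`. -/
noncomputable def pexp (J K : ℕ) (f : Finset (Fin J) → ℝ) : ℝ :=
  (∑ S ∈ (univ : Finset (Fin J)).powersetCard K, f S) /
    (((univ : Finset (Fin J)).powersetCard K).card : ℝ)

open scoped BigOperators

theorem sq_sum_eq_sum_sq_add_sum_offDiag {α R : Type*} [DecidableEq α] [CommSemiring R]
    (s : Finset α) (f : α → R) :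
    (∑ a ∈ s, f a) ^ 2 = ∑ a ∈ s, f a ^ 2 + ∑ p ∈ s.offDiag, f p.1 * f p.2 := by
  rw [sq, sum_mul_sum, ← sum_product', ← diag_union_offDiag, sum_union (disjoint_diag_offDiag _),
    sum_diag]
  simp only [sq]

theorem sum_sub_const_sq {ι R : Type*} [CommRing R] (s : Finset ι) (f : ι → R) (a : R) :
    ∑ i ∈ s, (f i - a) ^ 2 = ∑ i ∈ s, f i ^ 2 - 2 * a * ∑ i ∈ s, f i + #s * a ^ 2 := by
  simp_rw [sub_sq, sum_add_distrib, sum_sub_distrib, ← sum_mul, ← mul_sum, sum_const, nsmul_eq_mul]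
  ring

theorem expect_sub_expect_sq {ι R : Type*} [Field R] [CharZero R] {s : Finset ι}
    (hs : s.Nonempty) (f : ι → R) :
    𝔼 i ∈ s, (f i - 𝔼 j ∈ s, f j) ^ 2 = 𝔼 i ∈ s, f i ^ 2 - (𝔼 i ∈ s, f i) ^ 2 := by
  simp_rw [sub_sq, expect_add_distrib, expect_sub_distrib, expect_const hs, ← expect_mul,
    ← mul_expect]
  ring

section InclusionCounts

variable {α M : Type*} [Fintype α] [DecidableEq α] [AddCommMonoid M]

theorem sum_powersetCard_sum_mem (k : ℕ) (f : α → M) :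
    ∑ S ∈ powersetCard (k + 1) (univ : Finset α), ∑ a ∈ S, f a
      = (Fintype.card α - 1).choose k • ∑ a, f a := by
  rw [sum_comm' (t' := univ) (s' := fun a => {S ∈ powersetCard (k + 1) univ | {a} ⊆ S})
    (by simp), smul_sum]
  refine sum_congr rfl fun a _ => ?_
  rw [sum_const, card_filter_powersetCard_subset _ _ _ (subset_univ _) (by simp)]
  simp

theorem sum_powersetCard_sum_offDiag (k : ℕ) (g : α × α → M) :
    ∑ S ∈ powersetCard (k + 2) (univ : Finset α), ∑ p ∈ S.offDiag, g p
      = (Fintype.card α - 2).choose k • ∑ p ∈ univ.offDiag, g p := by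
  rw [sum_comm' (t' := univ.offDiag)
    (s' := fun p => {S ∈ powersetCard (k + 2) univ | {p.1, p.2} ⊆ S})
    (by simp [insert_subset_iff, and_assoc]), smul_sum]
  refine sum_congr rfl fun p hp => ?_
  have hcard : #{p.1, p.2} = 2 := card_pair (mem_offDiag.1 hp).2.2
  rw [sum_const, card_filter_powersetCard_subset _ _ _ (subset_univ _) (by omega), hcard]
  simp

end InclusionCounts

section InclusionProbabilities

variable {α R : Type*} [Fintype α] [DecidableEq α] [Field R] [CharZero R]

theorem expect_powersetCard_sum_mem {k : ℕ} (hk : k ≤ Fintype.card α) (f : α → R) :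
    𝔼 S ∈ powersetCard k (univ : Finset α), ∑ a ∈ S, f a
      = k / Fintype.card α * ∑ a, f a := by
  rcases k with _ | k
  · simp
  obtain ⟨m, hm⟩ : ∃ m, Fintype.card α = m + 1 := ⟨Fintype.card α - 1, by omega⟩
  have hchoose : ((m + 1 : ℕ) : R) * m.choose k = (m + 1).choose (k + 1) * (k + 1 : ℕ) := by
    exact_mod_cast Nat.add_one_mul_choose_eq m k
  have hpos : ((m + 1).choose (k + 1) : R) ≠ 0 := by
    exact_mod_cast (Nat.choose_pos (by omega)).ne'
  rw [expect_eq_sum_div_card, sum_powersetCard_sum_mem, card_powersetCard, card_univ, hm,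
    nsmul_eq_mul, Nat.add_sub_cancel]
  field_simp
  linear_combination (∑ a, f a) * hchoose

theorem expect_powersetCard_sum_offDiag {k : ℕ} (hk : k ≤ Fintype.card α) (g : α × α → R) :
    𝔼 S ∈ powersetCard k (univ : Finset α), ∑ p ∈ S.offDiag, g p
      = k * (k - 1) / (Fintype.card α * (Fintype.card α - 1)) * ∑ p ∈ univ.offDiag, g p := by
  rcases k with _ | _ | k
  · simp
  · rw [zero_add, Nat.cast_one, sub_self, mul_zero, zero_div, zero_mul]
    refine expect_eq_zero fun S hS => ?_
    obtain ⟨a, rfl⟩ := card_eq_one.1 (mem_powersetCard.1 hS).2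
    simp
  obtain ⟨m, hm⟩ : ∃ m, Fintype.card α = m + 2 := ⟨Fintype.card α - 2, by omega⟩
  have hchoose : ((m + 2 : ℕ) : R) * (m + 1 : ℕ) * m.choose k
      = (m + 2).choose (k + 2) * (k + 2 : ℕ) * (k + 1 : ℕ) := by
    have h₁ := Nat.add_one_mul_choose_eq m k
    have h₂ := Nat.add_one_mul_choose_eq (m + 1) (k + 1)
    norm_cast
    rw [mul_assoc, h₁, ← mul_assoc, h₂]
  have hpos : ((m + 2).choose (k + 2) : R) ≠ 0 := by
    exact_mod_cast (Nat.choose_pos (by omega)).ne'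
  have hm₂ : (m : R) + 2 ≠ 0 := by norm_cast
  have hm₁ : (m : R) + 2 - 1 ≠ 0 := by ring_nf; norm_cast; omega
  rw [expect_eq_sum_div_card, sum_powersetCard_sum_offDiag, card_powersetCard, card_univ, hm,
    nsmul_eq_mul, Nat.add_sub_cancel, show k + 1 + 1 = k + 2 from rfl]
  push_cast at hchoose ⊢
  field_simp
  linear_combination (∑ p ∈ univ.offDiag, g p) * hchoose

theorem expect_powersetCard_sq_sum {k : ℕ} (hk : k ≤ Fintype.card α) (f : α → R) :
    𝔼 S ∈ powersetCard k (univ : Finset α), (∑ a ∈ S, f a) ^ 2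
      = k / Fintype.card α * ∑ a, f a ^ 2
        + k * (k - 1) / (Fintype.card α * (Fintype.card α - 1))
          * ((∑ a, f a) ^ 2 - ∑ a, f a ^ 2) := by
  simp_rw [sq_sum_eq_sum_sq_add_sum_offDiag _ f]
  rw [expect_add_distrib, expect_powersetCard_sum_mem hk, expect_powersetCard_sum_offDiag hk,
    add_sub_cancel_left]

end InclusionProbabilities

theorem pexp_eq_expect (J K : ℕ) (f : Finset (Fin J) → ℝ) :
    pexp J K f = 𝔼 S ∈ powersetCard K univ, f S :=
  (expect_eq_sum_div_card _ _).symm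

theorem between_cluster_variance_estimator_general (J K : ℕ) (hK1 : 1 < K) (hK : K ≤ J)
    (c : Fin J → ℝ) :
    pexp J K (fun Q =>
        (1 - (K : ℝ) / (J : ℝ)) *
          (∑ j ∈ Q, (c j - (1 / (K : ℝ)) * ∑ j' ∈ Q, c j') ^ 2) /
          (((K : ℝ) - 1) * (K : ℝ))) =
      pexp J K (fun Q =>
        ((1 / (K : ℝ)) * ∑ j ∈ Q, c j -
          pexp J K (fun Q' => (1 / (K : ℝ)) * ∑ j ∈ Q', c j)) ^ 2) := by
  have hKJ : K ≤ Fintype.card (Fin J) := by simpa using hK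
  have hK₀ : (K : ℝ) ≠ 0 := by positivity
  have hK₁ : (K : ℝ) - 1 ≠ 0 := sub_ne_zero.2 (by exact_mod_cast hK1.ne')
  have hJ₀ : (J : ℝ) ≠ 0 := by exact_mod_cast (by omega : J ≠ 0)
  have hJ₁ : (J : ℝ) - 1 ≠ 0 := sub_ne_zero.2 (by exact_mod_cast (hK1.trans_le hK).ne')
  have hsample : ∀ Q ∈ powersetCard K (univ : Finset (Fin J)),
      (1 - (K : ℝ) / J) * (∑ j ∈ Q, (c j - 1 / (K : ℝ) * ∑ j' ∈ Q, c j') ^ 2) / ((K - 1) * K)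
        = (1 - (K : ℝ) / J) / ((K - 1) * K)
          * (∑ j ∈ Q, c j ^ 2 - 1 / (K : ℝ) * (∑ j ∈ Q, c j) ^ 2) := by
    intro Q hQ
    rw [sum_sub_const_sq, (mem_powersetCard.1 hQ).2]
    field_simp
    ring
  simp only [pexp_eq_expect]
  rw [expect_congr rfl hsample, expect_sub_expect_sq (powersetCard_nonempty.2 hKJ), ← mul_expect,
    expect_sub_distrib, ← mul_expect]
  simp_rw [mul_pow, ← mul_expect]
  rw [expect_powersetCard_sum_mem hKJ, expect_powersetCard_sq_sum hKJ,
    expect_powersetCard_sum_mem hKJ, Fintype.card_fin]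
  field_simp
  ring

/-- For `T = (1/K) Σ_{j∈Q} c j` with `Q` a uniformly random `K`-subset of
`Fin J` (`1 < K ≤ J`, `J ≥ 2`), the between-cluster variance estimator
`V̂ = (1 − K/J) · Σ_{j∈Q} (c j − T)² / ((K−1)·K)` is unbiased for `Var(T)`. -/
theorem between_cluster_variance_estimator (J K : ℕ) (hK1 : 1 < K) (hK : K ≤ J)
    (hJ : 2 ≤ J) (c : Fin J → ℝ) :
    pexp J K (fun Q =>
        (1 - (K : ℝ) / (J : ℝ)) *
          (∑ j ∈ Q, (c j - (1 / (K : ℝ)) * ∑ j' ∈ Q, c j') ^ 2) /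
          (((K : ℝ) - 1) * (K : ℝ))) =
      pexp J K (fun Q =>
        ((1 / (K : ℝ)) * ∑ j ∈ Q, c j -
          pexp J K (fun Q' => (1 / (K : ℝ)) * ∑ j ∈ Q', c j)) ^ 2) :=
  between_cluster_variance_estimator_general J K hK1 hK c
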